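/- Let d = 3, ν > 0 and s > 3. There exists a constant C₂ > 0 depending only on s such that: (i) |N_k(u)| ≤ C₂ C² / |k|^{s−1} for every C > 0, every divergence-free u ∈ Z(C,s) and every k ≠ 0; and (ii) for every C with 0 < C < ν/C₂ and every n ≥ 1, the set of real divergence-free sequences in Z(C,s) is forward invariant for the symmetric Galerkin projection of order n of the unforced (f ≡ 0) Navier–Stokes Fourier system: every real divergence-free solution starting in Z(C,s) remains in Z(C,s) for all forward time. -/

import Mathlib

/-!
Bounding `|Π_k v| ≤ |v|` and `|(u_{k1}·k)| ≤ |k| |u_{k1}|` reduces (i) to the lattice convolution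
estimate `∑_{k1} |k1|^{-s} |k - k1|^{-s} ≤ 2^{s+1} ζ(s) |k|^{-s}`, where `ζ(s) = ∑_{k ≠ 0} |k|^{-s}`
converges for `s > d`; it holds because one of `k1`, `k - k1` has norm at least `|k| / 2`.

For (ii), only the finitely many modes `0 < |k| ≤ n` move. If one of them reaches the boundary
`|u_k| = C / |k|^s` while `u` is still in `Z(C,s)`, then (i) gives
`d/dt |u_k|² = 2 Re ⟨u_k, N_k(u) - ν|k|² u_k⟩ ≤ 2 |u_k|² |k| (C₂ C - ν |k|) < 0`,
so no mode can cross its boundary.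
-/

noncomputable section

open scoped BigOperators

/-- Euclidean norm of an integer vector `k ∈ ℤ^d ⊂ ℝ^d`. -/
def znorm {d : ℕ} (k : Fin d → ℤ) : ℝ := Real.sqrt (∑ i, ((k i : ℝ))^2)

/-- The bilinear pairing `(a·k) = Σ_j a_j k_j` of a complex vector with an integer vector. -/
def dotZ {d : ℕ} (a : EuclideanSpace ℂ (Fin d)) (k : Fin d → ℤ) : ℂ := ∑ j, a j * (k j : ℂ)

/-- Orthogonal projection `Π_k` onto the orthogonal complement of the (real) vector `k`. -/
def projP {d : ℕ} (k : Fin d → ℤ) (v : EuclideanSpace ℂ (Fin d)) : EuclideanSpace ℂ (Fin d) :=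
  WithLp.toLp 2 (fun j => v j - (dotZ v k / ((∑ i, ((k i : ℝ))^2 : ℝ) : ℂ)) * (k j : ℂ))

/-- The `k1`-th term of the Navier–Stokes nonlinearity
`N_k(u) = -i Σ_{k1 ≠ 0} (u_{k1}·k) Π_k u_{k-k1}`. -/
def Nterm {d : ℕ} (u : (Fin d → ℤ) → EuclideanSpace ℂ (Fin d)) (k k1 : Fin d → ℤ) :
    EuclideanSpace ℂ (Fin d) :=
  if k1 = 0 then 0 else (-Complex.I * dotZ (u k1) k) • projP k (u (k - k1))

/-- The Navier–Stokes nonlinearity `N_k(u)`. -/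
def Nfun {d : ℕ} (u : (Fin d → ℤ) → EuclideanSpace ℂ (Fin d)) (k : Fin d → ℤ) :
    EuclideanSpace ℂ (Fin d) := ∑' k1, Nterm u k k1

/-- Energy `E(u) = Σ_k |u_k|²`. -/
def energy {d : ℕ} (u : (Fin d → ℤ) → EuclideanSpace ℂ (Fin d)) : ℝ := ∑' k, ‖u k‖^2

/-- Enstrophy `V(u) = Σ_k |k|²|u_k|²`. -/
def enstrophy {d : ℕ} (u : (Fin d → ℤ) → EuclideanSpace ℂ (Fin d)) : ℝ :=
  ∑' k, (znorm k)^2 * ‖u k‖^2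

/-- Divergence-free: `(u_k · k) = 0` for all `k`. -/
def divFree {d : ℕ} (u : (Fin d → ℤ) → EuclideanSpace ℂ (Fin d)) : Prop :=
  ∀ k, dotZ (u k) k = 0

/-- Reality condition: `u_{-k} = conj (u_k)`. -/
def realSeq {d : ℕ} (u : (Fin d → ℤ) → EuclideanSpace ℂ (Fin d)) : Prop :=
  ∀ k j, u (-k) j = starRingEnd ℂ (u k j)

/-- RHS of the Galerkin-projected Navier–Stokes system in the Fourier domain.
(For `u` supported on modes `0 < |k| ≤ n`, the `tsum` below reduces to the finite sum
over `k1 ≠ 0`, `|k1| ≤ n`, `0 < |k-k1| ≤ n`.) -/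
def GalerkinRHS {d : ℕ} (ν : ℝ) (fk : EuclideanSpace ℂ (Fin d))
    (u : (Fin d → ℤ) → EuclideanSpace ℂ (Fin d)) (k : Fin d → ℤ) :
    EuclideanSpace ℂ (Fin d) :=
  (∑' k1, Nterm u k k1) - ((ν * (znorm k)^2 : ℝ) : ℂ) • u k + projP k fk

/-- `u : ℝ → (ℤ^d → ℂ^d)` is a solution of the symmetric Galerkin projection of order `n`
of the Navier–Stokes Fourier system with viscosity `ν` and forcing `f`. -/
def IsGalerkinSol {d : ℕ} (ν n : ℝ) (f : ℝ → (Fin d → ℤ) → EuclideanSpace ℂ (Fin d))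
    (u : ℝ → (Fin d → ℤ) → EuclideanSpace ℂ (Fin d)) : Prop :=
  (∀ t, u t 0 = 0) ∧
  (∀ t k, n < znorm k → u t k = 0) ∧
  (∀ t (k : Fin d → ℤ), k ≠ 0 → znorm k ≤ n →
    HasDerivAt (fun s => u s k) (GalerkinRHS ν (f t k) (u t) k) t)

open Filter Set Topology

section LatticeNorm

variable {d : ℕ}

lemma znorm_nonneg (k : Fin d → ℤ) : 0 ≤ znorm k := Real.sqrt_nonneg _

def latticeVec (k : Fin d → ℤ) : EuclideanSpace ℝ (Fin d) := WithLp.toLp 2 (fun i => (k i : ℝ))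

lemma norm_latticeVec (k : Fin d → ℤ) : ‖latticeVec k‖ = znorm k := by
  simp [EuclideanSpace.norm_eq, znorm, latticeVec]

lemma znorm_pos {k : Fin d → ℤ} (hk : k ≠ 0) : 0 < znorm k := by
  rw [← norm_latticeVec, norm_pos_iff]
  contrapose! hk
  funext i
  simpa [latticeVec] using congrArg (· i) hk

lemma znorm_le_add (k k1 : Fin d → ℤ) : znorm k ≤ znorm k1 + znorm (k - k1) := by
  have h : latticeVec k = latticeVec k1 + latticeVec (k - k1) := by
    ext i; simp [latticeVec]
  simpa only [← norm_latticeVec, h] using norm_add_le (latticeVec k1) (latticeVec (k - k1))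

lemma abs_apply_le_znorm (k : Fin d → ℤ) (i : Fin d) : |(k i : ℝ)| ≤ znorm k := by
  have h := PiLp.norm_apply_le (latticeVec k) i
  rw [norm_latticeVec] at h
  simpa [latticeVec] using h

lemma one_le_znorm {k : Fin d → ℤ} (hk : k ≠ 0) : 1 ≤ znorm k := by
  obtain ⟨i, hi⟩ := Function.ne_iff.1 hk
  have : (1 : ℝ) ≤ |(k i : ℝ)| := by exact_mod_cast Int.one_le_abs hi
  exact this.trans (abs_apply_le_znorm k i)

lemma finite_setOf_znorm_le (n : ℝ) : {k : Fin d → ℤ | znorm k ≤ n}.Finite := by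
  refine (isCompact_closedBall (0 : Fin d → ℤ) n).finite_of_discrete.subset fun k hk => ?_
  rw [mem_closedBall_zero_iff, pi_norm_le_iff_of_nonneg ((znorm_nonneg k).trans hk)]
  intro i
  rw [Int.norm_eq_abs]
  exact (abs_apply_le_znorm k i).trans hk

lemma znorm_single_one [DecidableEq (Fin d)] (i : Fin d) : znorm (Pi.single i 1) = 1 := by
  simp [znorm, Pi.single_apply]

end LatticeNorm

section Projection

variable {d : ℕ}

def latticeVecC (k : Fin d → ℤ) : EuclideanSpace ℂ (Fin d) := WithLp.toLp 2 (fun i => (k i : ℂ))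

lemma norm_latticeVecC (k : Fin d → ℤ) : ‖latticeVecC k‖ = znorm k := by
  simp [EuclideanSpace.norm_eq, znorm, latticeVecC, sq_abs]

lemma dotZ_eq_inner (v : EuclideanSpace ℂ (Fin d)) (k : Fin d → ℤ) :
    dotZ v k = inner ℂ (latticeVecC k) v := by
  simp [dotZ, PiLp.inner_apply, latticeVecC, mul_comm]

lemma norm_dotZ_le (v : EuclideanSpace ℂ (Fin d)) (k : Fin d → ℤ) :
    ‖dotZ v k‖ ≤ znorm k * ‖v‖ := by
  rw [dotZ_eq_inner, ← norm_latticeVecC]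
  exact norm_inner_le_norm _ _

lemma projP_eq_starProjection (k : Fin d → ℤ) (v : EuclideanSpace ℂ (Fin d)) :
    projP k v = (ℂ ∙ latticeVecC k)ᗮ.starProjection v := by
  rw [Submodule.starProjection_orthogonal', sub_apply, one_apply_eq_self,
    Submodule.starProjection_singleton, norm_latticeVecC, ← dotZ_eq_inner]
  ext j
  simp [projP, latticeVecC, znorm,
    Real.sq_sqrt (Finset.sum_nonneg fun i _ => sq_nonneg ((k i : ℝ)))]

lemma norm_projP_le (k : Fin d → ℤ) (v : EuclideanSpace ℂ (Fin d)) : ‖projP k v‖ ≤ ‖v‖ := by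
  rw [projP_eq_starProjection]
  exact Submodule.norm_starProjection_apply_le _ v

lemma projP_zero (k : Fin d → ℤ) : projP k 0 = 0 := by
  rw [projP_eq_starProjection, map_zero]

lemma norm_Nterm_le (u : (Fin d → ℤ) → EuclideanSpace ℂ (Fin d)) (k k1 : Fin d → ℤ) :
    ‖Nterm u k k1‖ ≤ znorm k * (‖u k1‖ * ‖u (k - k1)‖) := by
  have := znorm_nonneg k
  unfold Nterm
  split_ifs
  · rw [norm_zero]; positivity
  · rw [norm_smul, norm_mul, norm_neg, Complex.norm_I, one_mul, ← mul_assoc]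
    gcongr
    exacts [norm_dotZ_le _ _, norm_projP_le _ _]

end Projection

section LatticeZeta

variable {d : ℕ} {s : ℝ}

lemma summable_znorm_rpow_neg (hs : d < s) :
    Summable fun k : Fin d → ℤ => znorm k ^ (-s) := by
  let b := (EuclideanSpace.basisFun (Fin d) ℝ).toBasis
  let L := Submodule.span ℤ (Set.range b)
  have hrank : Module.finrank ℤ L = d := by
    rw [ZLattice.rank ℝ L]; simp
  have hmem : ∀ k : Fin d → ℤ, latticeVec k ∈ L := by
    intro k
    have : latticeVec k = ∑ i, k i • b i := by
      ext j; simp [latticeVec, b, Finset.sum_apply, Pi.single_apply]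
    rw [this]
    exact Submodule.sum_mem _ fun i _ => Submodule.smul_mem _ _ (Submodule.subset_span ⟨i, rfl⟩)
  have hinj : Function.Injective fun k => (⟨latticeVec k, hmem k⟩ : L) := by
    intro k k' h
    funext i
    simpa [latticeVec] using congrArg (fun v : L => (v : EuclideanSpace ℝ (Fin d)) i) h
  have := (ZLattice.summable_norm_rpow L (-s) (by rw [hrank]; linarith)).comp_injective hinj
  simpa [Function.comp_def, Submodule.coe_norm, norm_latticeVec] using this

/-- The Epstein zeta function `∑_{k ∈ ℤ^d} |k|^{-s}` of the standard lattice; its `k = 0` term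
vanishes for `s ≠ 0` because `0 ^ (-s) = 0` in `Real.rpow`. -/
def latticeZeta (d : ℕ) (s : ℝ) : ℝ := ∑' k : Fin d → ℤ, znorm k ^ (-s)

lemma latticeZeta_pos [NeZero d] (hs : d < s) : 0 < latticeZeta d s := by
  classical
  refine (summable_znorm_rpow_neg hs).tsum_pos (fun k => Real.rpow_nonneg (znorm_nonneg k) _)
    (Pi.single 0 1) ?_
  rw [znorm_single_one, Real.one_rpow]
  exact one_pos

/-- Of `k1` and `k - k1`, one has norm at least `|k| / 2`. -/
lemma rpow_neg_mul_rpow_neg_le (hs : 0 ≤ s) {k : Fin d → ℤ} (hk : k ≠ 0) (k1 : Fin d → ℤ) :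
    znorm k1 ^ (-s) * znorm (k - k1) ^ (-s) ≤
      (znorm k / 2) ^ (-s) * (znorm k1 ^ (-s) + znorm (k - k1) ^ (-s)) := by
  have hhalf : 0 < znorm k / 2 := by linarith [znorm_pos hk]
  have h1 := Real.rpow_nonneg (znorm_nonneg k1) (-s)
  have h2 := Real.rpow_nonneg (znorm_nonneg (k - k1)) (-s)
  have hle : ∀ j : Fin d → ℤ, znorm k / 2 ≤ znorm j → znorm j ^ (-s) ≤ (znorm k / 2) ^ (-s) :=
    fun j hj => Real.rpow_le_rpow_of_nonpos hhalf hj (neg_nonpos.2 hs)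
  rcases le_total (znorm k / 2) (znorm (k - k1)) with hfar | hnear
  · nlinarith [hle _ hfar]
  · have := znorm_le_add k k1
    nlinarith [hle k1 (by linarith)]

lemma summable_znorm_sub_rpow_neg (hs : d < s) (k : Fin d → ℤ) :
    Summable fun k1 : Fin d → ℤ => znorm (k - k1) ^ (-s) :=
  (Equiv.subLeft k).summable_iff.2 (summable_znorm_rpow_neg hs)

lemma summable_rpow_neg_mul_rpow_neg (hs : d < s) {k : Fin d → ℤ} (hk : k ≠ 0) :
    Summable fun k1 => znorm k1 ^ (-s) * znorm (k - k1) ^ (-s) :=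
  (((summable_znorm_rpow_neg hs).add (summable_znorm_sub_rpow_neg hs k)).mul_left _).of_nonneg_of_le
    (fun _ => mul_nonneg (Real.rpow_nonneg (znorm_nonneg _) _)
      (Real.rpow_nonneg (znorm_nonneg _) _))
    (rpow_neg_mul_rpow_neg_le (le_trans (Nat.cast_nonneg d) hs.le) hk)

lemma tsum_rpow_neg_mul_rpow_neg_le (hs : d < s) {k : Fin d → ℤ} (hk : k ≠ 0) :
    ∑' k1, znorm k1 ^ (-s) * znorm (k - k1) ^ (-s) ≤
      2 ^ (s + 1) * latticeZeta d s * znorm k ^ (-s) := by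
  have hw := summable_znorm_rpow_neg hs
  have hw' := summable_znorm_sub_rpow_neg hs k
  refine ((summable_rpow_neg_mul_rpow_neg hs hk).tsum_le_tsum
    (rpow_neg_mul_rpow_neg_le (le_trans (Nat.cast_nonneg d) hs.le) hk)
    ((hw.add hw').mul_left _)).trans_eq ?_
  have hshift : ∑' k1, znorm (k - k1) ^ (-s) = latticeZeta d s :=
    (Equiv.subLeft k).tsum_eq (fun j => znorm j ^ (-s))
  rw [tsum_mul_left, hw.tsum_add hw', hshift,
    Real.div_rpow (znorm_nonneg k) zero_le_two, Real.rpow_add two_pos, Real.rpow_neg zero_le_two,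
    Real.rpow_one, latticeZeta]
  field_simp
  ring

end LatticeZeta

section Nonlinearity

variable {d : ℕ}

/-- The set `Z(C,s)` of the paper. -/
def decaySet (C s : ℝ) : Set ((Fin d → ℤ) → EuclideanSpace ℂ (Fin d)) :=
  {u | u 0 = 0 ∧ ∀ k, k ≠ 0 → ‖u k‖ ≤ C / znorm k ^ s}

lemma norm_le_of_mem_decaySet {C s : ℝ} (hs : s ≠ 0) {u : (Fin d → ℤ) → EuclideanSpace ℂ (Fin d)}
    (hu : u ∈ decaySet C s) (k : Fin d → ℤ) : ‖u k‖ ≤ C * znorm k ^ (-s) := by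
  rcases eq_or_ne k 0 with rfl | hk
  · simp [hu.1, znorm, Real.zero_rpow (neg_ne_zero.2 hs)]
  · rw [Real.rpow_neg (znorm_nonneg k), ← div_eq_mul_inv]
    exact hu.2 k hk

theorem norm_Nfun_le {C s : ℝ} (hs : d < s) {u : (Fin d → ℤ) → EuclideanSpace ℂ (Fin d)}
    (hu : u ∈ decaySet C s) {k : Fin d → ℤ} (hk : k ≠ 0) :
    ‖Nfun u k‖ ≤ 2 ^ (s + 1) * latticeZeta d s * C ^ 2 / znorm k ^ (s - 1) := by
  have hs0 : s ≠ 0 := (lt_of_le_of_lt (Nat.cast_nonneg d) hs).ne'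
  have hterm : ∀ k1, ‖Nterm u k k1‖ ≤
      znorm k * C ^ 2 * (znorm k1 ^ (-s) * znorm (k - k1) ^ (-s)) := fun k1 => by
    have h1 := norm_le_of_mem_decaySet hs0 hu k1
    have h2 := norm_le_of_mem_decaySet hs0 hu (k - k1)
    calc ‖Nterm u k k1‖ ≤ znorm k * (‖u k1‖ * ‖u (k - k1)‖) := norm_Nterm_le u k k1
      _ ≤ znorm k * ((C * znorm k1 ^ (-s)) * (C * znorm (k - k1) ^ (-s))) := by
          gcongr
          · exact znorm_nonneg k
          · exact (norm_nonneg _).trans h1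
      _ = _ := by ring
  have hmaj := (summable_rpow_neg_mul_rpow_neg hs hk).mul_left (znorm k * C ^ 2)
  have hsum : Summable fun k1 => ‖Nterm u k k1‖ :=
    hmaj.of_nonneg_of_le (fun _ => norm_nonneg _) hterm
  have hk0 := znorm_pos hk
  calc ‖Nfun u k‖ ≤ ∑' k1, ‖Nterm u k k1‖ := norm_tsum_le_tsum_norm hsum
    _ ≤ ∑' k1, znorm k * C ^ 2 * (znorm k1 ^ (-s) * znorm (k - k1) ^ (-s)) :=
        hsum.tsum_le_tsum hterm hmaj
    _ ≤ znorm k * C ^ 2 * (2 ^ (s + 1) * latticeZeta d s * znorm k ^ (-s)) := by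
        rw [tsum_mul_left]
        gcongr
        exact tsum_rpow_neg_mul_rpow_neg_le hs hk
    _ = 2 ^ (s + 1) * latticeZeta d s * C ^ 2 / znorm k ^ (s - 1) := by
        rw [Real.rpow_neg hk0.le, Real.rpow_sub_one hk0.ne']
        field_simp

end Nonlinearity

section Barrier

lemma eventually_le_of_hasDerivAt_neg {f : ℝ → ℝ} {f' x : ℝ} (hf : HasDerivAt f f' x)
    (hneg : f' < 0) : ∀ᶠ z in 𝓝[>] x, f z ≤ f x := by
  have hslope := (hasDerivAt_iff_tendsto_slope_left_right.1 hf).2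
  filter_upwards [hslope.eventually (gt_mem_nhds hneg), self_mem_nhdsWithin] with z hz hxz
  exact (slope_nonpos_iff_of_le (le_of_lt hxz)).1 hz.le

lemma forall_le_of_deriv_neg_at_boundary {ι : Type*} {K : Finset ι} {G G' : ι → ℝ → ℝ}
    {B : ι → ℝ} {a b : ℝ} (hG : ∀ j ∈ K, ∀ x, HasDerivAt (G j) (G' j x) x)
    (hbdry : ∀ x ∈ Ico a b, (∀ i ∈ K, G i x ≤ B i) → ∀ j ∈ K, G j x = B j → G' j x < 0)
    (ha : ∀ j ∈ K, G j a ≤ B j) (hab : a ≤ b) : ∀ j ∈ K, G j b ≤ B j := by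
  set S := {x | ∀ j ∈ K, G j x ≤ B j}
  have hclosed : IsClosed S := by
    simp only [S, Set.ofPred_forall]
    exact isClosed_biInter fun j hj =>
      isClosed_le (continuous_iff_continuousAt.2 fun x => (hG j hj x).continuousAt)
        continuous_const
  refine (hclosed.inter isClosed_Icc).Icc_subset_of_forall_mem_nhdsWithin ha ?_ ⟨hab, le_rfl⟩
  rintro x ⟨hxS, hxab⟩
  refine (eventually_all_finset K).2 fun j hj => ?_
  rcases (hxS j hj).lt_or_eq with hlt | heq
  · exact ((hG j hj x).continuousAt.eventually_lt continuousAt_const hlt).filter_mono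
      nhdsWithin_le_nhds |>.mono fun z hz => hz.le
  · exact (eventually_le_of_hasDerivAt_neg (hG j hj x) (hbdry x hxab hxS j hj heq)).mono
      fun z hz => hz.trans heq.le

end Barrier

section Galerkin

variable {d : ℕ}

lemma real_inner_sub_smul_self_neg {E : Type*} [NormedAddCommGroup E] [InnerProductSpace ℝ E]
    {v w : E} {a c : ℝ} (hw : ‖w‖ ≤ a * ‖v‖) (hac : a < c) (hv : v ≠ 0) :
    inner ℝ v (w - c • v) < 0 := by
  have hv' : 0 < ‖v‖ := norm_pos_iff.2 hv
  rw [inner_sub_right, real_inner_smul_right, real_inner_self_eq_norm_sq, sub_neg]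
  calc inner ℝ v w ≤ ‖v‖ * ‖w‖ := real_inner_le_norm v w
    _ ≤ ‖v‖ * (a * ‖v‖) := mul_le_mul_of_nonneg_left hw hv'.le
    _ = a * ‖v‖ ^ 2 := by ring
    _ < c * ‖v‖ ^ 2 := mul_lt_mul_of_pos_right hac (pow_pos hv' 2)

lemma galerkinRHS_zero (ν : ℝ) (u : (Fin d → ℤ) → EuclideanSpace ℂ (Fin d)) (k : Fin d → ℤ) :
    GalerkinRHS ν 0 u k = Nfun u k - (ν * znorm k ^ 2) • u k := by
  rw [GalerkinRHS, projP_zero, add_zero, Complex.coe_smul]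
  rfl

def galerkinModes (n : ℝ) : Finset (Fin d → ℤ) :=
  Set.Finite.toFinset (s := {k | k ≠ 0 ∧ znorm k ≤ n})
    ((finite_setOf_znorm_le n).subset fun _ hk => hk.2)

lemma mem_galerkinModes {n : ℝ} {k : Fin d → ℤ} : k ∈ galerkinModes n ↔ k ≠ 0 ∧ znorm k ≤ n := by
  simp [galerkinModes]

lemma IsGalerkinSol.mem_decaySet_iff {ν n C s : ℝ} {f : ℝ → (Fin d → ℤ) → EuclideanSpace ℂ (Fin d)}
    {u : ℝ → (Fin d → ℤ) → EuclideanSpace ℂ (Fin d)} (hsol : IsGalerkinSol ν n f u) (hC : 0 < C)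
    (x : ℝ) :
    u x ∈ decaySet C s ↔ ∀ k ∈ galerkinModes n, ‖u x k‖ ^ 2 ≤ (C / znorm k ^ s) ^ 2 := by
  have hsq : ∀ k : Fin d → ℤ, k ≠ 0 →
      (‖u x k‖ ^ 2 ≤ (C / znorm k ^ s) ^ 2 ↔ ‖u x k‖ ≤ C / znorm k ^ s) := fun k hk =>
    pow_le_pow_iff_left₀ (norm_nonneg _)
      (div_pos hC (Real.rpow_pos_of_pos (znorm_pos hk) s)).le two_ne_zero
  refine ⟨fun hx k hk => (hsq k (mem_galerkinModes.1 hk).1).2 (hx.2 k (mem_galerkinModes.1 hk).1),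
    fun hx => ⟨hsol.1 x, fun k hk => ?_⟩⟩
  rcases le_or_gt (znorm k) n with hkn | hkn
  · exact (hsq k hk).1 (hx k (mem_galerkinModes.2 ⟨hk, hkn⟩))
  · rw [hsol.2.1 x k hkn, norm_zero]
    exact div_nonneg hC.le (Real.rpow_nonneg (znorm_nonneg k) s)

lemma inner_galerkinRHS_neg_of_norm_eq {ν s C₂ C : ℝ}
    (hN : ∀ v : (Fin d → ℤ) → EuclideanSpace ℂ (Fin d), v ∈ decaySet C s →
      ∀ k, k ≠ 0 → ‖Nfun v k‖ ≤ C₂ * C ^ 2 / znorm k ^ (s - 1))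
    (hC : 0 < C) (hC₂ : 0 ≤ C₂) (hCν : C₂ * C < ν)
    {v : (Fin d → ℤ) → EuclideanSpace ℂ (Fin d)} (hv : v ∈ decaySet C s) {k : Fin d → ℤ}
    (hk : k ≠ 0) (hvk : ‖v k‖ = C / znorm k ^ s) :
    inner ℝ (v k) (GalerkinRHS ν 0 v k) < 0 := by
  have hzk := znorm_pos hk
  have hzks := Real.rpow_pos_of_pos hzk s
  have hNk : ‖Nfun v k‖ ≤ C₂ * C * znorm k * ‖v k‖ := by
    refine (hN v hv k hk).trans_eq ?_
    rw [hvk, Real.rpow_sub_one hzk.ne']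
    field_simp
  have hν : 0 < ν := (mul_nonneg hC₂ hC.le).trans_lt hCν
  have hrate : C₂ * C * znorm k < ν * znorm k ^ 2 :=
    calc C₂ * C * znorm k < ν * znorm k := mul_lt_mul_of_pos_right hCν hzk
      _ ≤ ν * znorm k ^ 2 :=
        mul_le_mul_of_nonneg_left (le_self_pow₀ (one_le_znorm hk) two_ne_zero) hν.le
  rw [galerkinRHS_zero]
  exact real_inner_sub_smul_self_neg hNk hrate (norm_pos_iff.1 (hvk ▸ div_pos hC hzks))

theorem IsGalerkinSol.mem_decaySet {ν n s C₂ C : ℝ}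
    {u : ℝ → (Fin d → ℤ) → EuclideanSpace ℂ (Fin d)} (hsol : IsGalerkinSol ν n (fun _ _ => 0) u)
    (hN : ∀ v : (Fin d → ℤ) → EuclideanSpace ℂ (Fin d), v ∈ decaySet C s →
      ∀ k, k ≠ 0 → ‖Nfun v k‖ ≤ C₂ * C ^ 2 / znorm k ^ (s - 1))
    (hC : 0 < C) (hC₂ : 0 ≤ C₂) (hCν : C₂ * C < ν) {t₀ t : ℝ} (ht : t₀ ≤ t)
    (h₀ : u t₀ ∈ decaySet C s) : u t ∈ decaySet C s := by
  rw [hsol.mem_decaySet_iff hC] at h₀ ⊢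
  refine forall_le_of_deriv_neg_at_boundary (fun k hk x =>
    (hsol.2.2 x k (mem_galerkinModes.1 hk).1 (mem_galerkinModes.1 hk).2).norm_sq) ?_ h₀ ht
  intro x _ hx k hk hkB
  have hk0 := (mem_galerkinModes.1 hk).1
  have hvk : ‖u x k‖ = C / znorm k ^ s := (pow_left_inj₀ (norm_nonneg _)
    (div_pos hC (Real.rpow_pos_of_pos (znorm_pos hk0) s)).le two_ne_zero).1 hkB
  exact mul_neg_of_pos_of_neg two_pos <|
    inner_galerkinRHS_neg_of_norm_eq hN hC hC₂ hCν ((hsol.mem_decaySet_iff hC x).2 hx) hk0 hvk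

end Galerkin

theorem trapping_region_3d_unforced_general (ν s : ℝ) (hs : 3 < s) :
    ∃ C₂ : ℝ, 0 < C₂ ∧
      ((∀ C : ℝ, 0 < C →
        ∀ u : (Fin 3 → ℤ) → EuclideanSpace ℂ (Fin 3),
          divFree u → u 0 = 0 →
          (∀ k : Fin 3 → ℤ, k ≠ 0 → ‖u k‖ ≤ C / znorm k ^ s) →
          ∀ k : Fin 3 → ℤ, k ≠ 0 → ‖Nfun u k‖ ≤ C₂ * C^2 / znorm k ^ (s - 1)) ∧
      (∀ C : ℝ, 0 < C → C < ν / C₂ → ∀ n : ℝ, 1 ≤ n →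
        ∀ u : ℝ → (Fin 3 → ℤ) → EuclideanSpace ℂ (Fin 3),
          IsGalerkinSol ν n (fun _ _ => 0) u →
          (∀ t, realSeq (u t)) → (∀ t, divFree (u t)) →
          ∀ t₀, (∀ k : Fin 3 → ℤ, k ≠ 0 → ‖u t₀ k‖ ≤ C / znorm k ^ s) →
          ∀ t, t₀ ≤ t → ∀ k : Fin 3 → ℤ, k ≠ 0 → ‖u t k‖ ≤ C / znorm k ^ s)) := by
  have hs' : ((3 : ℕ) : ℝ) < s := by exact_mod_cast hs
  have hN : ∀ C, ∀ u ∈ decaySet C s, ∀ k : Fin 3 → ℤ, k ≠ 0 →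
      ‖Nfun u k‖ ≤ 2 ^ (s + 1) * latticeZeta 3 s * C ^ 2 / znorm k ^ (s - 1) :=
    fun _ _ hu _ hk => norm_Nfun_le hs' hu hk
  have hC₂ : 0 < 2 ^ (s + 1) * latticeZeta 3 s :=
    mul_pos (Real.rpow_pos_of_pos two_pos _) (latticeZeta_pos hs')
  refine ⟨_, hC₂, fun C _ u _ hu0 hu k hk => hN C u ⟨hu0, hu⟩ k hk, ?_⟩
  intro C hC hCν n _ u hsol _ _ t₀ h₀ t ht k hk
  exact (hsol.mem_decaySet (hN C) hC hC₂.le ((lt_div_iff₀' hC₂).1 hCν) ht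
    ⟨hsol.1 t₀, h₀⟩).2 k hk

/-- 3D trapping region `Z(C,s)` for the unforced equation: there is `C₂ = C₂(s) > 0`
such that (i) `|N_k(u)| ≤ C₂ C²/|k|^{s-1}` on divergence-free elements of `Z(C,s)`, and
(ii) for `0 < C < ν/C₂` the set of real divergence-free sequences in `Z(C,s)` is
forward invariant for every symmetric Galerkin projection with `f ≡ 0`. -/
theorem trapping_region_3d_unforced (ν s : ℝ) (hν : 0 < ν) (hs : 3 < s) :
    ∃ C₂ : ℝ, 0 < C₂ ∧
      ((∀ C : ℝ, 0 < C →
        ∀ u : (Fin 3 → ℤ) → EuclideanSpace ℂ (Fin 3),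
          divFree u → u 0 = 0 →
          (∀ k : Fin 3 → ℤ, k ≠ 0 → ‖u k‖ ≤ C / znorm k ^ s) →
          ∀ k : Fin 3 → ℤ, k ≠ 0 → ‖Nfun u k‖ ≤ C₂ * C^2 / znorm k ^ (s - 1)) ∧
      (∀ C : ℝ, 0 < C → C < ν / C₂ → ∀ n : ℝ, 1 ≤ n →
        ∀ u : ℝ → (Fin 3 → ℤ) → EuclideanSpace ℂ (Fin 3),
          IsGalerkinSol ν n (fun _ _ => 0) u →
          (∀ t, realSeq (u t)) → (∀ t, divFree (u t)) →
          ∀ t₀, (∀ k : Fin 3 → ℤ, k ≠ 0 → ‖u t₀ k‖ ≤ C / znorm k ^ s) →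
          ∀ t, t₀ ≤ t → ∀ k : Fin 3 → ℤ, k ≠ 0 → ‖u t k‖ ≤ C / znorm k ^ s)) :=
  trapping_region_3d_unforced_general ν s hs
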